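/- Assume d ≥ 2 and fix an integer d₀ ≥ 1. For each fixed real s, the coefficient of α^{d+d₀-2} in the polynomial α ↦ ε(α, s) equals μ^{-d}·((D^{d-2}χ̃)(d)/(d-2)!)·s² - μ^{-d}·((D^{d-1}χ̃)(d)/(d-1)!)·((d+d₀)(d+d₀+1)/2 - 1)·s + (1/24)(d+d₀-1)(d+d₀)(d+d₀+1)(3(d+d₀)+2). -/
import Mathlib


/-- Backward difference operator: `(D f)(x) = f x - f (x-1)`. -/
noncomputable def bdiff (f : ℝ → ℝ) : ℝ → ℝ := fun x => f x - f (x - 1)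

/-- `d = r(r-1)a/2 + rb + r`. -/
def dInv (r a b : ℕ) : ℕ := r * (r - 1) * a / 2 + r * b + r

/-- `p = (r-1)a + b + 2`. -/
def pInv (r a b : ℕ) : ℕ := (r - 1) * a + b + 2

/-- The function `χ̃(x) = ∏_{j=1}^r (μx - p + 1 + (j-1)a/2)_{1+b+(r-j)a}`. -/
noncomputable def chiF (r a b : ℕ) (μ : ℝ) : ℝ → ℝ := fun x =>
  ∏ j ∈ Finset.Icc 1 r,
    (ascPochhammer ℝ (1 + b + (r - j) * a)).eval
      (μ * x - (pInv r a b : ℝ) + 1 + ((j : ℝ) - 1) * a / 2)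

/-- The explicit Rawnsley ε-function of the Cartan–Hartogs domain `Ω^{B^{d₀}}(μ)`:
`ε(α,s) = μ^{-d} ∑_{k=0}^d ((D^k χ̃)(d)/k!) s^{d-k} (α-d-d₀)_{k+d₀}`,
where `s = 1 - ‖w‖²/N(z,z̄)^μ`. -/
noncomputable def eps (r a b d₀ : ℕ) (μ : ℝ) (α s : ℝ) : ℝ :=
  (1 / μ ^ dInv r a b) *
    ∑ k ∈ Finset.range (dInv r a b + 1),
      (bdiff^[k] (chiF r a b μ) (dInv r a b : ℝ) / (Nat.factorial k : ℝ)) *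
        s ^ (dInv r a b - k) *
        (ascPochhammer ℝ (k + d₀)).eval (α - (dInv r a b : ℝ) - (d₀ : ℝ))

open Polynomial Finset

/-- Polynomial backward-difference operator. -/
noncomputable def Phi (P : ℝ[X]) : ℝ[X] := P - P.comp (X - C 1)

/-- `TT z n = ∏_{i<n} (X + C (z+i))`. -/
noncomputable def TT (z : ℝ) (n : ℕ) : ℝ[X] := ∏ i ∈ range n, (X + C (z + i))

noncomputable def e1R (n : ℕ) (z : ℝ) : ℝ := n * z + n * (n - 1) / 2

noncomputable def e2R (n : ℕ) (z : ℝ) : ℝ :=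
  ((e1R n z) ^ 2 - ((n : ℝ) * z ^ 2 + z * n * (n - 1) + n * (n - 1) * (2 * n - 1) / 6)) / 2

lemma bdiff_iter_eval (P : ℝ[X]) : ∀ k, (bdiff^[k] (fun y => P.eval y)) =
    fun y => (Phi^[k] P).eval y := by
  intro k
  induction k with
  | zero => rfl
  | succ k ih =>
    rw [Function.iterate_succ_apply', Function.iterate_succ_apply', ih]
    funext x
    simp [bdiff, Phi, eval_comp]

lemma coeff_comp_X_sub_C_one (P : ℝ[X]) (t : ℕ) (h : P.natDegree ≤ t + 1) :
    (P.comp (X - C 1)).coeff t = P.coeff t - (t + 1) * P.coeff (t + 1) := by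
  have hX : (X - C (1:ℝ)) = X + C (-1) := by rw [C_neg, C_1, sub_eq_add_neg]
  rw [hX, comp_eq_sum_left, Polynomial.sum, finset_sum_coeff]
  have hsub : P.support ⊆ range (t + 2) := by
    intro e he
    have := Polynomial.le_natDegree_of_mem_supp e he
    exact mem_range.2 (by omega)
  rw [Finset.sum_subset hsub (by
    intro e _ he
    have : P.coeff e = 0 := Polynomial.notMem_support_iff.1 he
    simp [this])]
  have hterm : ∀ e, (C (P.coeff e) * (X + C (-1:ℝ)) ^ e).coeff t =
      P.coeff e * ((-1:ℝ) ^ (e - t) * (e.choose t : ℝ)) := by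
    intro e
    rw [coeff_C_mul, coeff_X_add_C_pow]
  simp only [hterm]
  rw [show t + 2 = (t + 1) + 1 by ring, Finset.sum_range_succ, Finset.sum_range_succ]
  have hz : ∀ e ∈ range t, P.coeff e * ((-1:ℝ) ^ (e - t) * (e.choose t : ℝ)) = 0 := by
    intro e he
    rw [Nat.choose_eq_zero_of_lt (mem_range.1 he)]
    simp
  rw [Finset.sum_eq_zero hz]
  simp [Nat.choose_succ_self_right]
  ring

lemma coeff_Phi (P : ℝ[X]) (t : ℕ) (h : P.natDegree ≤ t + 1) :
    (Phi P).coeff t = (t + 1) * P.coeff (t + 1) := by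
  rw [Phi, coeff_sub, coeff_comp_X_sub_C_one P t h]
  ring

lemma Phi_natDegree_le (P : ℝ[X]) (n : ℕ) (h : P.natDegree ≤ n + 1) :
    (Phi P).natDegree ≤ n := by
  rw [Polynomial.natDegree_le_iff_coeff_eq_zero]
  intro N hN
  have h1 : P.natDegree ≤ N + 1 := by omega
  rw [coeff_Phi P N h1, Polynomial.coeff_eq_zero_of_natDegree_lt (by omega)]
  ring

lemma Phi_iter (P : ℝ[X]) (d : ℕ) (h : P.natDegree ≤ d) : ∀ k, k ≤ d →
    (Phi^[k] P).natDegree ≤ d - k ∧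
      (Phi^[k] P).coeff (d - k) = (d.descFactorial k : ℝ) * P.coeff d := by
  intro k
  induction k with
  | zero => intro _; simpa using h
  | succ k ih =>
    intro hk
    obtain ⟨h1, h2⟩ := ih (by omega)
    have hdk : d - k = (d - (k + 1)) + 1 := by omega
    constructor
    · rw [Function.iterate_succ_apply']
      exact Phi_natDegree_le _ _ (by omega)
    · have hcast : ((d - k : ℕ) : ℝ) = ((d - (k + 1) : ℕ) : ℝ) + 1 := by
        exact_mod_cast congrArg (Nat.cast : ℕ → ℝ) hdk
      rw [Function.iterate_succ_apply', coeff_Phi _ _ (by omega), ← hdk, h2,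
        Nat.descFactorial_succ, Nat.cast_mul, ← hcast]
      ring

lemma Phi_iter_self_eval (P : ℝ[X]) (d : ℕ) (h : P.natDegree ≤ d) (x : ℝ) :
    (Phi^[d] P).eval x = (d.factorial : ℝ) * P.coeff d := by
  obtain ⟨h1, h2⟩ := Phi_iter P d h d le_rfl
  simp only [Nat.sub_self] at h1 h2
  rw [Polynomial.eq_C_of_natDegree_le_zero h1, eval_C, h2, Nat.descFactorial_self]

lemma TT_monic (z : ℝ) (n : ℕ) : (TT z n).Monic :=
  monic_prod_of_monic _ _ fun i _ => monic_X_add_C _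

lemma TT_natDegree (z : ℝ) (n : ℕ) : (TT z n).natDegree = n := by
  rw [TT, natDegree_prod_of_monic _ _ fun _ _ => monic_X_add_C _,
    Finset.sum_congr rfl fun i _ => natDegree_X_add_C _]
  simp

lemma TT_coeff_self (z : ℝ) (n : ℕ) : (TT z n).coeff n = 1 := by
  have := (TT_monic z n).coeff_natDegree
  rwa [TT_natDegree] at this

lemma coeff_mul_linear (P : ℝ[X]) (w : ℝ) (k : ℕ) :
    (P * (X + C w)).coeff (k + 1) = P.coeff k + w * P.coeff (k + 1) := by
  rw [mul_add, coeff_add, coeff_mul_X, coeff_mul_C]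
  ring

lemma TT_succ (z : ℝ) (n : ℕ) : TT z (n + 1) = TT z n * (X + C (z + n)) :=
  Finset.prod_range_succ _ _

lemma TT_coeff_sub_one (z : ℝ) : ∀ n, (TT z (n + 1)).coeff n = e1R (n + 1) z := by
  intro n
  induction n with
  | zero =>
    rw [TT_succ]
    simp [TT, e1R]
  | succ n ih =>
    rw [TT_succ, coeff_mul_linear, ih, TT_coeff_self, e1R, e1R]
    push_cast
    ring

lemma TT_coeff_sub_two (z : ℝ) : ∀ n, (TT z (n + 2)).coeff n = e2R (n + 2) z := by
  intro n
  induction n with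
  | zero =>
    rw [TT_succ, Polynomial.mul_coeff_zero]
    simp [TT, e2R, e1R]
    ring
  | succ n ih =>
    rw [TT_succ, coeff_mul_linear, ih, TT_coeff_sub_one, e2R, e2R, e1R, e1R]
    push_cast
    ring

lemma asc_comp (c : ℝ) : ∀ n, (ascPochhammer ℝ n).comp (X - C c) = TT (-c) n := by
  intro n
  induction n with
  | zero => simp [TT, ascPochhammer_zero]
  | succ n ih =>
    rw [ascPochhammer_succ_right, mul_comp, ih, TT_succ]
    congr 1
    simp only [add_comp, X_comp, natCast_comp]
    rw [show ((n : ℝ[X])) = C ((n : ℕ) : ℝ) from by simp, C_add, C_neg]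
    ring

/-- the polynomial χ̃. -/
noncomputable def chiP (r a b : ℕ) (μ : ℝ) : ℝ[X] :=
  ∏ j ∈ Finset.Icc 1 r, (ascPochhammer ℝ (1 + b + (r - j) * a)).comp
    (C μ * X + C (-(pInv r a b : ℝ) + 1 + ((j : ℝ) - 1) * a / 2))

lemma chiF_eq (r a b : ℕ) (μ : ℝ) : chiF r a b μ = fun x => (chiP r a b μ).eval x := by
  funext x
  rw [chiF, chiP, eval_prod]
  refine Finset.prod_congr rfl fun j _ => ?_
  rw [eval_comp]
  congr 1
  simp [eval_mul, eval_add, eval_C, eval_X]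
  ring

lemma sum_deg (r a b : ℕ) (hr : 1 ≤ r) :
    ∑ j ∈ Finset.Icc 1 r, (1 + b + (r - j) * a) = dInv r a b := by
  have h1 : Finset.Icc 1 r = Finset.Ico 1 (r + 1) := by
    rw [Finset.Ico_add_one_right_eq_Icc]
  rw [h1, Finset.sum_Ico_eq_sum_range]
  have h2 : ∀ i ∈ range (r + 1 - 1), (1 + b + (r - (1 + i)) * a) = 1 + b + (r - 1 - i) * a := by
    intro i _
    congr 2
    omega
  rw [Finset.sum_congr rfl h2, show r + 1 - 1 = r from by omega]
  have h4 : ∑ i ∈ range r, (1 + b + (r - 1 - i) * a) =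
      r * (1 + b) + (∑ i ∈ range r, (r - 1 - i)) * a := by
    rw [Finset.sum_add_distrib, Finset.sum_const, ← Finset.sum_mul]
    simp [mul_comm]
  have h5 : ∑ i ∈ range r, (r - 1 - i) = ∑ i ∈ range r, i :=
    Finset.sum_range_reflect (fun i => i) r
  rw [h4, h5, Finset.sum_range_id]
  obtain ⟨c, hc⟩ := Nat.even_mul_succ_self (r - 1)
  have hrr : r * (r - 1) = c + c := by
    have h6 : r - 1 + 1 = r := by omega
    rw [h6] at hc
    rw [mul_comm]
    exact hc
  have hc1 : r * (r - 1) / 2 = c := by omega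
  have hc2 : r * (r - 1) * a / 2 = c * a := by
    rw [hrr, show (c + c) * a = 2 * (c * a) from by ring,
      Nat.mul_div_cancel_left _ (by norm_num)]
  rw [dInv, hc1, hc2]
  ring

lemma chiP_natDegree (r a b : ℕ) (hr : 1 ≤ r) (μ : ℝ) (hμ : μ ≠ 0) :
    (chiP r a b μ).natDegree = dInv r a b ∧
      (chiP r a b μ).coeff (dInv r a b) = μ ^ dInv r a b := by
  set q : ℕ → ℝ[X] := fun j => C μ * X + C (-(pInv r a b : ℝ) + 1 + ((j : ℝ) - 1) * a / 2)
    with hq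
  have hqdeg : ∀ j, (q j).natDegree = 1 := fun j => natDegree_linear hμ
  have hqlc : ∀ j, (q j).leadingCoeff = μ := fun j => leadingCoeff_linear hμ
  have hfdeg : ∀ j, ((ascPochhammer ℝ (1 + b + (r - j) * a)).comp (q j)).natDegree
      = 1 + b + (r - j) * a := by
    intro j
    rw [natDegree_comp, ascPochhammer_natDegree, hqdeg, mul_one]
  have hflc : ∀ j, ((ascPochhammer ℝ (1 + b + (r - j) * a)).comp (q j)).leadingCoeff
      = μ ^ (1 + b + (r - j) * a) := by
    intro j
    rw [Polynomial.leadingCoeff_comp (by rw [hqdeg]; norm_num), hqlc,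
      (monic_ascPochhammer _ _).leadingCoeff, ascPochhammer_natDegree, one_mul]
  have hne : ∀ j ∈ Finset.Icc 1 r,
      (ascPochhammer ℝ (1 + b + (r - j) * a)).comp (q j) ≠ 0 := by
    intro j _
    intro hcontra
    have := hflc j
    rw [hcontra] at this
    simp at this
    exact pow_ne_zero _ hμ this.symm
  have hdeg : (chiP r a b μ).natDegree = dInv r a b := by
    rw [chiP, Polynomial.natDegree_prod _ _ hne, ← sum_deg r a b hr]
    exact Finset.sum_congr rfl fun j _ => hfdeg j
  refine ⟨hdeg, ?_⟩
  have hlc : (chiP r a b μ).leadingCoeff = μ ^ dInv r a b := by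
    rw [chiP, Polynomial.leadingCoeff_prod]
    calc ∏ j ∈ Finset.Icc 1 r,
          ((ascPochhammer ℝ (1 + b + (r - j) * a)).comp (q j)).leadingCoeff
        = ∏ j ∈ Finset.Icc 1 r, μ ^ (1 + b + (r - j) * a) :=
          Finset.prod_congr rfl fun j _ => hflc j
      _ = μ ^ (∑ j ∈ Finset.Icc 1 r, (1 + b + (r - j) * a)) := by
          rw [← Finset.prod_pow_eq_pow_sum]
      _ = μ ^ dInv r a b := by rw [sum_deg r a b hr]
  rw [Polynomial.leadingCoeff, hdeg] at hlc
  exact hlc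

theorem stmt12 (r a b d₀ : ℕ) (hr : 1 ≤ r) (hd₀ : 1 ≤ d₀) (μ : ℝ) (hμ : 0 < μ)
    (hd : 2 ≤ dInv r a b) (s : ℝ) :
    ∃ Q : Polynomial ℝ, (∀ α : ℝ, Q.eval α = eps r a b d₀ μ α s) ∧
      Q.coeff (dInv r a b + d₀ - 2) =
        (1 / μ ^ dInv r a b) *
            (bdiff^[dInv r a b - 2] (chiF r a b μ) (dInv r a b : ℝ) /
              (Nat.factorial (dInv r a b - 2) : ℝ)) * s ^ 2 -
          (1 / μ ^ dInv r a b) *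
              (bdiff^[dInv r a b - 1] (chiF r a b μ) (dInv r a b : ℝ) /
                (Nat.factorial (dInv r a b - 1) : ℝ)) *
              (((dInv r a b : ℝ) + (d₀ : ℝ)) * ((dInv r a b : ℝ) + (d₀ : ℝ) + 1) / 2 - 1) * s +
          1 / 24 * ((dInv r a b : ℝ) + (d₀ : ℝ) - 1) * ((dInv r a b : ℝ) + (d₀ : ℝ)) *
            ((dInv r a b : ℝ) + (d₀ : ℝ) + 1) * (3 * ((dInv r a b : ℝ) + (d₀ : ℝ)) + 2) := by
  set d := dInv r a b with hd_def
  set cD : ℝ := (d : ℝ) + (d₀ : ℝ) with hcD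
  set A : ℕ → ℝ := fun k =>
    bdiff^[k] (chiF r a b μ) (d : ℝ) / (Nat.factorial k : ℝ) * s ^ (d - k) with hA
  refine ⟨C (1 / μ ^ d) * ∑ k ∈ Finset.range (d + 1), C (A k) * TT (-cD) (k + d₀), ?_, ?_⟩
  · intro α
    rw [eval_mul, eval_C, eval_finset_sum]
    rw [eps]
    congr 1
    refine Finset.sum_congr rfl fun k _ => ?_
    rw [eval_mul, eval_C, ← asc_comp, eval_comp]
    simp only [eval_sub, eval_X, eval_C]
    rw [show α - cD = α - (d : ℝ) - (d₀ : ℝ) by rw [hcD]; ring]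
  · rw [Polynomial.coeff_C_mul, Polynomial.finset_sum_coeff]
    simp only [Polynomial.coeff_C_mul]
    have hsplit : d + 1 = (d - 2) + 1 + 1 + 1 := by omega
    rw [hsplit, Finset.sum_range_succ, Finset.sum_range_succ, Finset.sum_range_succ]
    have hi1 : d - 2 + 1 = d - 1 := by omega
    have hi2 : d - 2 + 1 + 1 = d := by omega
    rw [hi1, hi2]
    have hzero : ∀ k ∈ Finset.range (d - 2),
        A k * (TT (-cD) (k + d₀)).coeff (d + d₀ - 2) = 0 := by
      intro k hk
      have hk' := Finset.mem_range.1 hk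
      rw [Polynomial.coeff_eq_zero_of_natDegree_lt (by rw [TT_natDegree]; omega)]
      ring
    rw [Finset.sum_eq_zero hzero, zero_add]
    -- coefficient values
    have hc1 : (TT (-cD) (d - 2 + d₀)).coeff (d + d₀ - 2) = 1 := by
      rw [show d - 2 + d₀ = d + d₀ - 2 by omega, TT_coeff_self]
    have hm1 : d - 1 + d₀ = (d + d₀ - 2) + 1 := by omega
    have hc2 : (TT (-cD) (d - 1 + d₀)).coeff (d + d₀ - 2) = e1R (d - 1 + d₀) (-cD) := by
      have h := TT_coeff_sub_one (-cD) (d + d₀ - 2)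
      rw [← hm1] at h
      exact h
    have hm2 : d + d₀ = (d + d₀ - 2) + 2 := by omega
    have hc3 : (TT (-cD) (d + d₀)).coeff (d + d₀ - 2) = e2R (d + d₀) (-cD) := by
      have h := TT_coeff_sub_two (-cD) (d + d₀ - 2)
      rw [← hm2] at h
      exact h
    rw [hc1, hc2, hc3]
    -- the top difference
    have hchi : bdiff^[d] (chiF r a b μ) (d : ℝ) = (d.factorial : ℝ) * μ ^ d := by
      obtain ⟨hdeg, hcoeff⟩ := chiP_natDegree r a b hr μ hμ.ne'
      rw [← hd_def] at hdeg hcoeff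
      rw [chiF_eq, bdiff_iter_eval]
      simp only []
      rw [Phi_iter_self_eval _ _ (le_of_eq hdeg) _, hcoeff]
    have hAd' : A d = μ ^ d := by
      simp only [hA, Nat.sub_self, pow_zero, mul_one, hchi]
      exact mul_div_cancel_left₀ _ (by exact_mod_cast d.factorial_ne_zero)
    rw [hAd']
    -- expand A (d-2), A (d-1)
    have hA2 : A (d - 2) = bdiff^[d - 2] (chiF r a b μ) (d : ℝ) /
        (Nat.factorial (d - 2) : ℝ) * s ^ 2 := by
      simp only [hA]
      rw [show d - (d - 2) = 2 from by omega]
    have hA1 : A (d - 1) = bdiff^[d - 1] (chiF r a b μ) (d : ℝ) /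
        (Nat.factorial (d - 1) : ℝ) * s ^ 1 := by
      simp only [hA]
      rw [show d - (d - 1) = 1 from by omega]
    rw [hA2, hA1]
    -- cast lemmas
    have hcast1 : ((d - 1 + d₀ : ℕ) : ℝ) = cD - 1 := by
      rw [hcD]; push_cast [Nat.cast_sub (show 1 ≤ d by omega)]; ring
    have hcast2 : ((d + d₀ : ℕ) : ℝ) = cD := by rw [hcD]; push_cast; ring
    rw [e1R, e2R, e1R, hcast1, hcast2]
    set u := bdiff^[d - 2] (chiF r a b μ) (d : ℝ) / (Nat.factorial (d - 2) : ℝ) with hu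
    set v := bdiff^[d - 1] (chiF r a b μ) (d : ℝ) / (Nat.factorial (d - 1) : ℝ) with hv
    have hμd : μ ^ d ≠ 0 := pow_ne_zero _ hμ.ne'
    field_simp
    ring
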